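/- For every integer n ≥ 3, the sum over k from 3 to n of H_k/(k(k−1)(k−2)) equals (2n^2+2n−1)/(4n(n+1)) − H_{n+1}/(2n(n−1)). -/
import Mathlib


/-- The `n`-th harmonic number `H_n = ∑_{k=1}^n 1/k`, with `H_0 = 0`. -/
def H (n : ℕ) : ℚ := ∑ k ∈ Finset.range n, 1 / ((k : ℚ) + 1)

/-- The generalized harmonic number of order 2, `H_n^{(2)} = ∑_{k=1}^n 1/k^2`, with `H_0^{(2)} = 0`. -/
def H2 (n : ℕ) : ℚ := ∑ k ∈ Finset.range n, 1 / ((k : ℚ) + 1) ^ 2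

lemma H_succ (n : ℕ) : H (n + 1) = H n + 1 / ((n : ℚ) + 1) := by
  simp [H, Finset.sum_range_succ]

theorem stmt_11 (n : ℕ) (hn : 3 ≤ n) :
    ∑ k ∈ Finset.Icc 3 n, H k / ((k : ℚ) * ((k : ℚ) - 1) * ((k : ℚ) - 2)) =
      (2 * (n : ℚ) ^ 2 + 2 * (n : ℚ) - 1) / (4 * (n : ℚ) * ((n : ℚ) + 1))
        - H (n + 1) / (2 * (n : ℚ) * ((n : ℚ) - 1)) := by
  induction n with
  | zero => omega
  | succ m ih =>
    rcases Nat.lt_or_ge m 3 with hm | hm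
    · interval_cases m
      · omega
      · omega
      · norm_num [Finset.Icc_self, H, Finset.sum_range_succ]
    · have hmc : (3:ℚ) ≤ (m:ℚ) := by exact_mod_cast hm
      rw [Finset.sum_Icc_succ_top (by omega), ih hm, H_succ (m+1), H_succ m]
      have h1 : (m:ℚ) ≠ 0 := by positivity
      have h2 : (m:ℚ) - 1 ≠ 0 := by nlinarith
      have h3 : (m:ℚ) - 2 ≠ 0 := by nlinarith
      have h4 : (m:ℚ) + 1 ≠ 0 := by positivity
      have h5 : (m:ℚ) + 2 ≠ 0 := by positivity
      push_cast
      have h6 : (m:ℚ) + 1 - 1 ≠ 0 := by ring_nf; exact h1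
      have h7 : (m:ℚ) + 1 - 2 ≠ 0 := fun h => h2 (by linarith)
      field_simp
      ring
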